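/- Assume d⃗ = (d_1, …, d_k) is odd-symmetric (in particular d is odd) and S is an admissible φ-invariant sequence. Then for all α, λ ∈ F, every A ∈ h(α,λ,S) satisfies A_{i, d+1−i} = 0 for i = 1, …, (d−1)/2. In particular, if in addition d_1 = 1, then p_{1,k}(A) = 0 for every A ∈ h(α,λ,S). -/

import Mathlib

/-!
`Phi` is a Lie algebra automorphism of `gl(d, F)`; it fixes `E(S)` by assumption and, for a
symmetric `d⃗`, moves `D(α, λ)` only by the scalar matrix `((k - 1)λ - 2α) • 1`. Scalar matrices
are central, so the matrices fixed by `Phi` up to a scalar form a Lie subalgebra, which hence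
contains `h(α, λ, S)`. At an antidiagonal position `(x, d - 1 - x)` the automorphism acts as
multiplication by `(-1)^d = -1`, while scalar matrices vanish there unless `x` is the centre;
so every member of `h(α, λ, S)` vanishes at the other antidiagonal entries. When `d₁ = d_k = 1`
the block `p_{1,k}` is the corner entry `(0, d - 1)`.
-/

open scoped Classical

noncomputable section

namespace Paper

attribute [local instance] LieRing.ofAssociativeRing

variable {F : Type*}

/-- Offset (starting global index) of the `i`-th block. -/
def off {k : ℕ} (dv : Fin k → ℕ) (i : Fin k) : ℕ := ∑ t ∈ Finset.Iio i, dv t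

/-- Total size `d = d₁ + ⋯ + d_k`. -/
def dtot {k : ℕ} (dv : Fin k → ℕ) : ℕ := ∑ t, dv t

theorem off_add_lt {k : ℕ} (dv : Fin k → ℕ) (i : Fin k) (r : Fin (dv i)) :
    off dv i + (r : ℕ) < dtot dv := by
  have h1 : off dv i + dv i ≤ dtot dv := by
    have h : off dv i + dv i = ∑ t ∈ insert i (Finset.Iio i), dv t := by
      rw [Finset.sum_insert (by simp), add_comm]
      rfl
    rw [h]
    exact Finset.sum_le_sum_of_subset (Finset.subset_univ _)
  have := r.isLt
  omega

/-- The global index of the `r`-th row/column of the `i`-th block. -/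
def emb {k : ℕ} (dv : Fin k → ℕ) (i : Fin k) (r : Fin (dv i)) : Fin (dtot dv) :=
  ⟨off dv i + r, off_add_lt dv i r⟩

/-- The projection `p_{i,j}` onto the `(i,j)`-block. -/
def blk {k : ℕ} (dv : Fin k → ℕ) (i j : Fin k)
    (A : Matrix (Fin (dtot dv)) (Fin (dtot dv)) F) :
    Matrix (Fin (dv i)) (Fin (dv j)) F :=
  Matrix.of fun r s => A (emb dv i r) (emb dv j s)

/-- The `p × p` upper triangular Jordan block `J^p(α)`. -/
def Jord [Field F] (p : ℕ) (α : F) : Matrix (Fin p) (Fin p) F :=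
  Matrix.of fun a b =>
    if (b : ℕ) = (a : ℕ) then α else if (b : ℕ) = (a : ℕ) + 1 then 1 else 0

/-- The matrix whose `(i,j)` block is `M` and all other blocks vanish. -/
def embMat [Field F] {k : ℕ} (dv : Fin k → ℕ) (i j : Fin k)
    (M : Matrix (Fin (dv i)) (Fin (dv j)) F) :
    Matrix (Fin (dtot dv)) (Fin (dtot dv)) F :=
  Matrix.of fun x y => ∑ r, ∑ s, if x = emb dv i r ∧ y = emb dv j s then M r s else 0

/-- The block diagonal matrix `D(α,λ) = J^{d₁}(α) ⊕ J^{d₂}(α-λ) ⊕ ⋯ ⊕ J^{d_k}(α-(k-1)λ)`. -/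
def Dmat [Field F] {k : ℕ} (dv : Fin k → ℕ) (α lam : F) :
    Matrix (Fin (dtot dv)) (Fin (dtot dv)) F :=
  ∑ i : Fin k, embMat dv i i (Jord (dv i) (α - ((i : ℕ) : F) * lam))

/-- `A` is the matrix `E(S)` of an admissible sequence `S`:  all blocks vanish except the
blocks `p_{i,i+1}`, and each block `p_{i,i+1}` has nonzero lower-left (i.e. `(dᵢ,1)`) entry. -/
def IsEShaped [Field F] {k : ℕ} (dv : Fin k → ℕ)
    (A : Matrix (Fin (dtot dv)) (Fin (dtot dv)) F) : Prop :=
  (∀ i j : Fin k, (j : ℕ) ≠ (i : ℕ) + 1 → blk dv i j A = 0) ∧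
  (∀ i j : Fin k, (j : ℕ) = (i : ℕ) + 1 →
    ∀ (hr : dv i - 1 < dv i) (hs : 0 < dv j),
      A (emb dv i ⟨dv i - 1, hr⟩) (emb dv j ⟨0, hs⟩) ≠ 0)

/-- The matrix `E(C)` of the canonical sequence `C`. -/
def CanE (F : Type*) [Field F] {k : ℕ} (dv : Fin k → ℕ) :
    Matrix (Fin (dtot dv)) (Fin (dtot dv)) F :=
  Matrix.of fun x y =>
    if ∃ i j : Fin k, (j : ℕ) = (i : ℕ) + 1 ∧
        (x : ℕ) = off dv i + (dv i - 1) ∧ (y : ℕ) = off dv j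
    then 1 else 0

/-- The Lie subalgebra `h(α,λ,S)` of `gl(d,F)` generated by `D(α,λ)` and `E(S) = A`. -/
def hAlg (F : Type*) [Field F] {k : ℕ} (dv : Fin k → ℕ) (α lam : F)
    (A : Matrix (Fin (dtot dv)) (Fin (dtot dv)) F) :
    LieSubalgebra F (Matrix (Fin (dtot dv)) (Fin (dtot dv)) F) :=
  LieSubalgebra.lieSpan F _ {Dmat dv α lam, A}

/-- The Lie subalgebra `n(S)` generated by the matrices `(ad D(0,0))^l (E(S))`, `l ≥ 0`. -/
def nAlg (F : Type*) [Field F] {k : ℕ} (dv : Fin k → ℕ)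
    (A : Matrix (Fin (dtot dv)) (Fin (dtot dv)) F) :
    LieSubalgebra F (Matrix (Fin (dtot dv)) (Fin (dtot dv)) F) :=
  LieSubalgebra.lieSpan F _ {X | ∃ l : ℕ, X = (fun Y => ⁅Dmat dv (0 : F) 0, Y⁆)^[l] A}

/-- `r_{i,j}`:  `0` if the `(i,j)`-blocks of all members of `h(0,0,C)` vanish, and otherwise
the minimal rank of a nonzero `(i,j)`-block of a member of `h(0,0,C)`. -/
def rr (F : Type*) [Field F] {k : ℕ} (dv : Fin k → ℕ) (i j : Fin k) : ℕ :=
  if ∀ X ∈ hAlg F dv 0 0 (CanE F dv), blk dv i j X = 0 then 0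
  else sInf {n | ∃ X ∈ hAlg F dv 0 0 (CanE F dv),
    blk dv i j X ≠ 0 ∧ (blk dv i j X).rank = n}

/-- The automorphism `φ(A)_{i,j} = (−1)^{i−j+1} A_{d+1−j,d+1−i}` (here written 0-indexed). -/
def Phi (F : Type*) [Field F] (d : ℕ) (A : Matrix (Fin d) (Fin d) F) :
    Matrix (Fin d) (Fin d) F :=
  Matrix.of fun x y =>
    (-1 : F) ^ ((x : ℕ) + (y : ℕ) + 1) *
      A ⟨d - 1 - (y : ℕ), by have := y.isLt; omega⟩ ⟨d - 1 - (x : ℕ), by have := x.isLt; omega⟩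

/-- `d⃗` is symmetric: `dᵢ = d_{k+1−i}` for all `i` (0-indexed: `dᵢ = d_{k-1-i}`). -/
def SymmSeq {k : ℕ} (dv : Fin k → ℕ) : Prop :=
  ∀ i j : Fin k, (i : ℕ) + (j : ℕ) = k - 1 → dv i = dv j

/-- `d⃗` is odd-symmetric: symmetric, `k` odd and the middle `d_{(k+1)/2}` odd. -/
def OddSymmSeq {k : ℕ} (dv : Fin k → ℕ) : Prop :=
  SymmSeq dv ∧ Odd k ∧ ∀ i : Fin k, 2 * (i : ℕ) = k - 1 → Odd (dv i)

/-- Conditions (1) and (2) of Definition `Normalized` (weak normalization), expressed on the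
matrix `A = E(S)`, so that `S(i)_{a,b} = A (emb i a) (emb (i+1) b)` (0-indexed). -/
def IsWeaklyNormalized [Field F] {k : ℕ} (dv : Fin k → ℕ)
    (A : Matrix (Fin (dtot dv)) (Fin (dtot dv)) F) : Prop :=
  (∀ i j : Fin k, (j : ℕ) = (i : ℕ) + 1 →
      ∀ (hr : dv i - 1 < dv i) (hs : 0 < dv j),
        A (emb dv i ⟨dv i - 1, hr⟩) (emb dv j ⟨0, hs⟩) = 1) ∧
  (∀ i j l : Fin k, (j : ℕ) = (i : ℕ) + 1 → (l : ℕ) = (j : ℕ) + 1 →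
      ∀ (hr : dv i - 1 < dv i) (s : Fin (dv j)) (hs : dv j - 1 - (s : ℕ) < dv j)
        (h0 : 0 < dv l),
        A (emb dv i ⟨dv i - 1, hr⟩) (emb dv j s) =
          A (emb dv j ⟨dv j - 1 - (s : ℕ), hs⟩) (emb dv l ⟨0, h0⟩))

/-- The sequence `S` (given through its matrix `A = E(S)`) is normalized. -/
def IsNormalized [Field F] {k : ℕ} (dv : Fin k → ℕ)
    (A : Matrix (Fin (dtot dv)) (Fin (dtot dv)) F) : Prop :=
  IsWeaklyNormalized dv A ∧
  (∀ i j : Fin k, (i : ℕ) = 0 → (j : ℕ) = 1 →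
      ∀ (r : Fin (dv i)) (hs : 0 < dv j), (r : ℕ) ≠ dv i - 1 →
        A (emb dv i r) (emb dv j ⟨0, hs⟩) = 0) ∧
  (∀ i j : Fin k, (j : ℕ) = (i : ℕ) + 1 → (j : ℕ) = k - 1 →
      ∀ (hr : dv i - 1 < dv i) (s : Fin (dv j)), (s : ℕ) ≠ 0 →
        A (emb dv i ⟨dv i - 1, hr⟩) (emb dv j s) = 0)

/-- Membership in the group `G(d⃗)`: a block diagonal matrix each of whose diagonal blocks is
a polynomial with nonzero constant term evaluated at `J^{dᵢ}(0)`. -/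
def InG (F : Type*) [Field F] {k : ℕ} (dv : Fin k → ℕ)
    (P : Matrix (Fin (dtot dv)) (Fin (dtot dv)) F) : Prop :=
  IsUnit P ∧ ∃ q : Fin k → Polynomial F, (∀ i, (q i).coeff 0 ≠ 0) ∧
    P = ∑ i : Fin k, embMat dv i i (Polynomial.aeval (Jord (dv i) (0 : F)) (q i))

/-- The nilpotency degree of a Lie algebra: the least `m` with `L^m = 0` in the lower central
series `L^0 = L`, `L^{i+1} = [L, L^i]`. -/
def nilDeg (F : Type*) (L : Type*) [Field F] [LieRing L] [LieAlgebra F L] : ℕ :=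
  sInf {m | LieModule.lowerCentralSeries F L L m = ⊥}

section Blocks

variable {k : ℕ} (dv : Fin k → ℕ)

lemma val_emb (i : Fin k) (r : Fin (dv i)) : (emb dv i r : ℕ) = off dv i + r := rfl

lemma emb_eq_finSigmaFinEquiv (i : Fin k) (r : Fin (dv i)) :
    emb dv i r = finSigmaFinEquiv ⟨i, r⟩ := by
  have hIio : Finset.univ.map (Fin.castLEEmb i.isLt.le) = Finset.Iio i := by
    ext t
    simp only [Finset.mem_map, Finset.mem_univ, true_and, Finset.mem_Iio, Fin.lt_def]
    exact ⟨fun ⟨u, hu⟩ => hu ▸ u.isLt, fun ht => ⟨⟨t, ht⟩, rfl⟩⟩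
  ext
  rw [finSigmaFinEquiv_apply]
  change off dv i + r = _
  rw [off, ← hIio, Finset.sum_map]
  rfl

lemma exists_emb_eq (x : Fin (dtot dv)) : ∃ i r, emb dv i r = x := by
  obtain ⟨⟨i, r⟩, h⟩ := finSigmaFinEquiv.surjective x
  exact ⟨i, r, (emb_eq_finSigmaFinEquiv dv i r).trans h⟩

lemma emb_eq_emb_iff {i j : Fin k} {r : Fin (dv i)} {s : Fin (dv j)} :
    emb dv i r = emb dv j s ↔ (⟨i, r⟩ : (i : Fin k) × Fin (dv i)) = ⟨j, s⟩ := by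
  rw [emb_eq_finSigmaFinEquiv, emb_eq_finSigmaFinEquiv]
  exact finSigmaFinEquiv.injective.eq_iff

lemma emb_injective (i : Fin k) : Function.Injective (emb dv i) := fun r s h => by
  simpa using (emb_eq_emb_iff dv).1 h

lemma eq_of_emb_eq_emb {i j : Fin k} {r : Fin (dv i)} {s : Fin (dv j)}
    (h : emb dv i r = emb dv j s) : i = j :=
  congrArg Sigma.fst ((emb_eq_emb_iff dv).1 h)

lemma dtot_eq_off_add_add_sum_Ioi (i : Fin k) :
    dtot dv = off dv i + dv i + ∑ t ∈ Finset.Ioi i, dv t := by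
  rw [dtot, ← Finset.sum_filter_add_sum_filter_not Finset.univ (· < i) dv, Finset.filter_gt_eq_Iio]
  simp only [not_lt]
  rw [Finset.filter_le_eq_Ici, Finset.Ici_eq_cons_Ioi, Finset.sum_cons, off, add_assoc]

variable [Field F]

lemma embMat_emb_emb {i j : Fin k} (M : Matrix (Fin (dv i)) (Fin (dv j)) F)
    (r : Fin (dv i)) (s : Fin (dv j)) :
    embMat dv i j M (emb dv i r) (emb dv j s) = M r s := by
  simp [embMat, (emb_injective dv _).eq_iff, ite_and]

lemma embMat_emb_emb_of_ne {i j i' j' : Fin k} (M : Matrix (Fin (dv i)) (Fin (dv j)) F)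
    (r : Fin (dv i')) (s : Fin (dv j')) (h : i' ≠ i ∨ j' ≠ j) :
    embMat dv i j M (emb dv i' r) (emb dv j' s) = 0 := by
  rw [embMat, Matrix.of_apply]
  refine Finset.sum_eq_zero fun r' _ => Finset.sum_eq_zero fun s' _ => if_neg ?_
  rintro ⟨hr, hs⟩
  exact h.elim (· (eq_of_emb_eq_emb dv hr)) (· (eq_of_emb_eq_emb dv hs))

lemma Dmat_emb_emb (α lam : F) (i : Fin k) (r s : Fin (dv i)) :
    Dmat dv α lam (emb dv i r) (emb dv i s) = Jord (dv i) (α - ((i : ℕ) : F) * lam) r s := by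
  rw [Dmat, Matrix.sum_apply, Finset.sum_eq_single i, embMat_emb_emb]
  · exact fun m _ hm => embMat_emb_emb_of_ne dv _ r s (Or.inl (Ne.symm hm))
  · simp

lemma Dmat_emb_emb_of_ne (α lam : F) {i j : Fin k} (hij : i ≠ j)
    (r : Fin (dv i)) (s : Fin (dv j)) :
    Dmat dv α lam (emb dv i r) (emb dv j s) = 0 := by
  rw [Dmat, Matrix.sum_apply]
  refine Finset.sum_eq_zero fun m _ => embMat_emb_emb_of_ne dv _ r s ?_
  by_cases him : i = m
  · exact Or.inr (him ▸ Ne.symm hij)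
  · exact Or.inl him

end Blocks

namespace SymmSeq

variable {k : ℕ} {dv : Fin k → ℕ} (hs : SymmSeq dv)
include hs

lemma apply_rev (i : Fin k) : dv i.rev = dv i :=
  hs _ _ (by rw [Fin.val_rev]; omega)

lemma off_rev (i : Fin k) : off dv i.rev = ∑ t ∈ Finset.Ioi i, dv t := by
  rw [off, ← Fin.map_revPerm_Ioi, Finset.sum_map]
  exact Finset.sum_congr rfl fun t _ => hs.apply_rev t

lemma rev_emb (i : Fin k) (r : Fin (dv i)) :
    (emb dv i r).rev = emb dv i.rev (Fin.cast (hs.apply_rev i).symm r.rev) := by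
  have := dtot_eq_off_add_add_sum_Ioi dv i
  have := hs.off_rev i
  ext
  simp only [Fin.val_rev, emb, Fin.val_cast]
  omega

end SymmSeq

lemma OddSymmSeq.odd_dtot {k : ℕ} {dv : Fin k → ℕ} (h : OddSymmSeq dv) : Odd (dtot dv) := by
  obtain ⟨hs, ⟨m, rfl⟩, hmid⟩ := h
  set c : Fin (2 * m + 1) := ⟨m, by omega⟩
  have hc : c.rev = c := Fin.ext (by simp [c]; omega)
  have := hs.off_rev c
  rw [hc] at this
  rw [dtot_eq_off_add_add_sum_Ioi dv c, ← this]
  obtain ⟨p, hp⟩ := hmid c (by simp [c])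
  exact ⟨off dv c + p, by omega⟩

section Phi

open Matrix

variable (F) [Field F] {d : ℕ}

lemma Phi_apply (X : Matrix (Fin d) (Fin d) F) (x y : Fin d) :
    Phi F d X x y = (-1 : F) ^ ((x : ℕ) + (y : ℕ) + 1) * X y.rev x.rev := by
  simp only [Phi, Matrix.of_apply]
  congr 2 <;> ext <;> simp only [Fin.val_rev] <;> omega

def signs (d : ℕ) : Matrix (Fin d) (Fin d) F := Matrix.diagonal fun i => (-1 : F) ^ (i : ℕ)

lemma signs_mul_signs : signs F d * signs F d = 1 := by
  simp [signs, Matrix.diagonal_mul_diagonal, ← mul_pow]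

lemma Phi_eq (X : Matrix (Fin d) (Fin d) F) :
    Phi F d X = -(signs F d * (X.submatrix Fin.rev Fin.rev)ᵀ * signs F d) := by
  ext x y
  simp only [Phi_apply, signs, pow_succ, pow_add, mul_neg, mul_one, neg_mul, Matrix.neg_apply, neg_inj,
    mul_diagonal, diagonal_mul, transpose_submatrix, submatrix_apply, transpose_apply]
  ring

lemma Phi_add (X Y : Matrix (Fin d) (Fin d) F) : Phi F d (X + Y) = Phi F d X + Phi F d Y := by
  ext x y
  simp [Phi_apply, mul_add]

lemma Phi_smul (c : F) (X : Matrix (Fin d) (Fin d) F) : Phi F d (c • X) = c • Phi F d X := by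
  ext x y
  simp only [Phi_apply, Matrix.smul_apply, smul_eq_mul]
  ring

lemma Phi_mul (X Y : Matrix (Fin d) (Fin d) F) :
    Phi F d (X * Y) = -(Phi F d Y * Phi F d X) := by
  have hrev : (X * Y).submatrix Fin.rev Fin.rev =
      X.submatrix Fin.rev Fin.rev * Y.submatrix Fin.rev Fin.rev :=
    (Matrix.submatrix_mul_equiv X Y _ Fin.revPerm _).symm
  simp only [Phi_eq, hrev, Matrix.transpose_mul, neg_mul_neg, Matrix.mul_assoc,
    ← Matrix.mul_assoc (signs F d) (signs F d), signs_mul_signs, Matrix.one_mul]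

lemma Phi_lie (X Y : Matrix (Fin d) (Fin d) F) : Phi F d ⁅X, Y⁆ = ⁅Phi F d X, Phi F d Y⁆ := by
  rw [Ring.lie_def, Ring.lie_def, sub_eq_add_neg, Phi_add, ← neg_one_smul F (Y * X), Phi_smul,
    Phi_mul, Phi_mul]
  simp [sub_eq_add_neg, add_comm]

variable (d) in
def phiFixedModScalars : LieSubalgebra F (Matrix (Fin d) (Fin d) F) where
  carrier := {X | ∃ a : F, Phi F d X = X + a • 1}
  add_mem' := by
    rintro X Y ⟨a, hX⟩ ⟨b, hY⟩
    exact ⟨a + b, by rw [Phi_add, hX, hY, add_smul]; abel⟩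
  zero_mem' := ⟨0, by simpa using Phi_smul F 0 0⟩
  smul_mem' := by
    rintro c X ⟨a, hX⟩
    exact ⟨c * a, by rw [Phi_smul, hX, smul_add, mul_smul]⟩
  lie_mem' := by
    rintro X Y ⟨a, hX⟩ ⟨b, hY⟩
    refine ⟨0, ?_⟩
    rw [Phi_lie, hX, hY]
    simp only [Ring.lie_def, add_mul, mul_add, smul_mul_smul_comm, Matrix.smul_mul,
      Matrix.mul_smul, Matrix.mul_one, Matrix.one_mul, mul_comm a b, zero_smul, add_zero]
    abel

variable {F}

lemma apply_rev_eq_zero_of_mem_phiFixedModScalars [NeZero (2 : F)] (hd : Odd d)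
    {X : Matrix (Fin d) (Fin d) F} (hX : X ∈ phiFixedModScalars F d) {x : Fin d}
    (hx : x ≠ x.rev) : X x x.rev = 0 := by
  obtain ⟨a, hXa⟩ := hX
  have hxx := congrFun₂ hXa x x.rev
  have hsum : (x : ℕ) + (x.rev : ℕ) + 1 = d := by rw [Fin.val_rev]; omega
  rw [Phi_apply, Fin.rev_rev, hsum, hd.neg_one_pow, Matrix.add_apply, Matrix.smul_apply,
    Matrix.one_apply_ne hx, smul_zero, add_zero, neg_one_mul, neg_eq_iff_add_eq_zero,
    ← two_mul, mul_eq_zero] at hxx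
  exact hxx.resolve_left two_ne_zero

end Phi

lemma SymmSeq.Phi_Dmat [Field F] {k : ℕ} {dv : Fin k → ℕ} (hs : SymmSeq dv) (α lam : F) :
    Phi F (dtot dv) (Dmat dv α lam) =
      Dmat dv α lam + (((k - 1 : ℕ) : F) * lam - 2 * α) • (1 : Matrix _ _ F) := by
  ext x y
  obtain ⟨i, r, rfl⟩ := exists_emb_eq dv x
  obtain ⟨j, s, rfl⟩ := exists_emb_eq dv y
  rw [Phi_apply, hs.rev_emb, hs.rev_emb, Matrix.add_apply, Matrix.smul_apply, smul_eq_mul]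
  by_cases hij : i = j
  · subst hij
    have hrev : ((k - (i + 1) : ℕ) : F) = ((k - 1 : ℕ) : F) - (i : ℕ) := by
      rw [← Nat.cast_sub (by omega)]
      congr 1
      omega
    have := r.isLt
    simp only [Dmat_emb_emb, Matrix.one_apply, (emb_injective dv i).eq_iff, Jord,
      Matrix.of_apply, Fin.val_cast, Fin.val_rev, val_emb, Fin.ext_iff, hrev]
    by_cases hsr : (s : ℕ) = r
    · rw [if_pos (by omega), if_pos hsr, if_pos (by omega), hsr,
        Odd.neg_one_pow ⟨off dv i + r, by ring⟩]
      ring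
    by_cases hsr' : (s : ℕ) = r + 1
    · rw [if_neg (by omega), if_pos (by omega), if_neg hsr, if_pos hsr', if_neg (by omega),
        Even.neg_one_pow ⟨off dv i + r + 1, by omega⟩]
      ring
    · rw [if_neg (by omega), if_neg (by omega), if_neg hsr, if_neg hsr', if_neg (by omega)]
      ring
  · rw [Dmat_emb_emb_of_ne dv _ _ (fun h => hij (Fin.rev_injective h).symm),
      Dmat_emb_emb_of_ne dv _ _ hij, Matrix.one_apply_ne (fun h => hij (eq_of_emb_eq_emb dv h))]
    simp

lemma hAlg_le_phiFixedModScalars [Field F] {k : ℕ} {dv : Fin k → ℕ} (hs : SymmSeq dv)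
    {A : Matrix (Fin (dtot dv)) (Fin (dtot dv)) F} (hA : Phi F (dtot dv) A = A) (α lam : F) :
    hAlg F dv α lam A ≤ phiFixedModScalars F (dtot dv) :=
  LieSubalgebra.lieSpan_le.2 <| by
    rintro X (rfl | rfl)
    · exact ⟨_, hs.Phi_Dmat α lam⟩
    · exact ⟨0, by rw [hA, zero_smul, add_zero]⟩

theorem statement5_general {F : Type*} [Field F] [CharZero F] {k : ℕ} (hk : 2 ≤ k)
    (dv : Fin k → ℕ) (hsym : OddSymmSeq dv)
    (A : Matrix (Fin (dtot dv)) (Fin (dtot dv)) F)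
    (hphi : Phi F (dtot dv) A = A) (α lam : F) :
    (∀ X ∈ hAlg F dv α lam A, ∀ x y : Fin (dtot dv),
      (x : ℕ) + (y : ℕ) + 1 = dtot dv → 2 * (x : ℕ) + 1 < dtot dv → X x y = 0) ∧
    (∀ i1 : Fin k, (i1 : ℕ) = 0 → dv i1 = 1 → ∀ ik : Fin k, (ik : ℕ) = k - 1 →
      ∀ X ∈ hAlg F dv α lam A, blk dv i1 ik X = 0) := by
  have hvanish : ∀ X ∈ hAlg F dv α lam A, ∀ x, x ≠ x.rev → X x x.rev = 0 := fun X hX _ hx =>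
    apply_rev_eq_zero_of_mem_phiFixedModScalars hsym.odd_dtot
      (hAlg_le_phiFixedModScalars hsym.1 hphi α lam hX) hx
  refine ⟨fun X hX x y hxy hx => ?_, fun i1 hi1 hd1 ik hik X hX => ?_⟩
  · obtain rfl : y = x.rev := Fin.ext (by rw [Fin.val_rev]; omega)
    refine hvanish X hX x fun h => ?_
    have := congrArg Fin.val h
    rw [Fin.val_rev] at this
    omega
  · obtain rfl : ik = i1.rev := Fin.ext (by rw [Fin.val_rev]; omega)
    have hne : i1 ≠ i1.rev := fun h => by
      have := congrArg Fin.val h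
      rw [Fin.val_rev] at this
      omega
    ext r s
    have hcorner : emb dv i1.rev s = (emb dv i1 r).rev := by
      rw [hsym.1.rev_emb]
      congr 1
      ext
      have := hsym.1.apply_rev i1
      have := s.isLt
      simp only [Fin.val_cast, Fin.val_rev]
      omega
    have hoff : emb dv i1 r ≠ (emb dv i1 r).rev := fun h =>
      hne (eq_of_emb_eq_emb dv (h.trans hcorner.symm))
    rw [blk, Matrix.of_apply, hcorner, hvanish X hX _ hoff, Matrix.zero_apply]

/-- Proposition `ida`:  if `d⃗` is odd-symmetric and `S` is an admissible
`φ`-invariant sequence, then every `A ∈ h(α,λ,S)` vanishes on the upper half of the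
antidiagonal, i.e. `A_{i,d+1−i} = 0` for `i = 1, …, (d−1)/2` (0-indexed: `X x y = 0` whenever
`x + y = d − 1` and `2x + 1 < d`).  In particular, if `d₁ = 1` then `p_{1,k}(X) = 0` for all
`X ∈ h(α,λ,S)`. -/
theorem statement5 {F : Type*} [Field F] [CharZero F] {k : ℕ} (hk : 2 ≤ k)
    (dv : Fin k → ℕ) (hdv : ∀ i, 0 < dv i) (hsym : OddSymmSeq dv)
    (A : Matrix (Fin (dtot dv)) (Fin (dtot dv)) F) (hA : IsEShaped dv A)
    (hphi : Phi F (dtot dv) A = A) (α lam : F) :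
    (∀ X ∈ hAlg F dv α lam A, ∀ x y : Fin (dtot dv),
      (x : ℕ) + (y : ℕ) + 1 = dtot dv → 2 * (x : ℕ) + 1 < dtot dv → X x y = 0) ∧
    (∀ i1 : Fin k, (i1 : ℕ) = 0 → dv i1 = 1 → ∀ ik : Fin k, (ik : ℕ) = k - 1 →
      ∀ X ∈ hAlg F dv α lam A, blk dv i1 ik X = 0) :=
  statement5_general hk dv hsym A hphi α lam

end Paper
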